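/- Let hat : ℝ³ → ℝ^{3×3} be the hat map sending θ = (θ₁,θ₂,θ₃) to the skew-symmetric matrix [[0, −θ₃, θ₂], [θ₃, 0, −θ₁], [−θ₂, θ₁, 0]]. Then for every θ ∈ ℝ³ with 0 < ‖θ‖ < π, the rotation matrix R = exp(hat(θ)) satisfies the logarithm formula hat(θ) = (‖θ‖ / (2 sin‖θ‖)) · (R − Rᵀ). -/

import Mathlib

/-!
`hat θ` satisfies `(hat θ)ᵀ = -hat θ` and `(hat θ)³ = -‖θ‖² • hat θ`. Hence
`R - Rᵀ = exp (hat θ) - exp (-hat θ)` keeps only the odd terms of the exponential series, and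
these collapse to the sine series: `R - Rᵀ = (2 sin ‖θ‖ / ‖θ‖) • hat θ`, which is inverted using
`sin ‖θ‖ ≠ 0`.
-/

open Matrix

/-- The hat map sending `θ` to the skew-symmetric matrix satisfying `hat θ *ᵥ x = θ × x`. -/
noncomputable def hat (θ : Fin 3 → ℝ) : Matrix (Fin 3) (Fin 3) ℝ :=
  !![0, -θ 2, θ 1; θ 2, 0, -θ 0; -θ 1, θ 0, 0]

/-- The Euclidean norm on `ℝ³`. -/
noncomputable def enorm3 (θ : Fin 3 → ℝ) : ℝ := Real.sqrt (θ 0 ^ 2 + θ 1 ^ 2 + θ 2 ^ 2)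

open NormedSpace
open scoped Nat

theorem pow_two_mul_add_one_of_pow_three_eq_smul {R M : Type*} [CommMonoid R] [Monoid M]
    [MulAction R M] [IsScalarTower R M M] {a : M} {c : R} (h : a ^ 3 = c • a) (k : ℕ) :
    a ^ (2 * k + 1) = c ^ k • a := by
  induction k with
  | zero => simp
  | succ k ih =>
    calc a ^ (2 * (k + 1) + 1) = a ^ (2 * k + 1) * a ^ 2 := by rw [← pow_add]; ring_nf
      _ = c ^ k • a ^ 3 := by rw [ih, smul_mul_assoc, ← pow_succ']
      _ = c ^ (k + 1) • a := by rw [h, smul_smul, pow_succ]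

theorem exp_sub_exp_neg_of_pow_three_eq_neg_sq_smul {𝔸 : Type*} [NormedRing 𝔸]
    [NormedAlgebra ℝ 𝔸] [CompleteSpace 𝔸] {a : 𝔸} {r : ℝ} (hr : r ≠ 0)
    (h : a ^ 3 = -r ^ 2 • a) :
    exp a - exp (-a) = (2 * Real.sin r / r) • a := by
  have hdiff := (exp_series_hasSum_exp' (𝕂 := ℝ) a).sub (exp_series_hasSum_exp' (𝕂 := ℝ) (-a))
  refine hdiff.unique ?_
  rw [← zero_add ((2 * Real.sin r / r) • a)]
  refine HasSum.even_add_odd ?_ ?_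
  · simpa only [Even.neg_pow ⟨_, two_mul _⟩, sub_self] using hasSum_zero
  · have hsin := ((Real.hasSum_sin r).mul_left (2 / r)).smul_const a
    rw [div_mul_eq_mul_div] at hsin
    refine hsin.congr_fun fun k => ?_
    rw [Odd.neg_pow ⟨k, rfl⟩, smul_neg, sub_neg_eq_add, ← two_smul ℝ,
      pow_two_mul_add_one_of_pow_three_eq_smul h, smul_smul, smul_smul]
    congr 1
    rw [neg_pow, pow_succ r (2 * k), pow_mul]
    field_simp

theorem hat_transpose (θ : Fin 3 → ℝ) : (hat θ)ᵀ = -hat θ := by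
  ext i j
  fin_cases i <;> fin_cases j <;> simp [hat]

theorem enorm3_sq (θ : Fin 3 → ℝ) : enorm3 θ ^ 2 = θ 0 ^ 2 + θ 1 ^ 2 + θ 2 ^ 2 :=
  Real.sq_sqrt (by positivity)

theorem hat_pow_three (θ : Fin 3 → ℝ) : hat θ ^ 3 = -enorm3 θ ^ 2 • hat θ := by
  rw [enorm3_sq]
  ext i j
  fin_cases i <;> fin_cases j <;>
    simp [hat, pow_succ, Matrix.mul_apply, Fin.sum_univ_three] <;> ring

attribute [local instance] Matrix.linftyOpNormedRing Matrix.linftyOpNormedAlgebra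

/-- **Logarithm formula on SO(3).** For every `θ` with `0 < ‖θ‖ < π`, the rotation matrix
`R = exp(hat θ)` satisfies `hat θ = (‖θ‖ / (2 sin‖θ‖)) · (R − Rᵀ)`. -/
theorem so3_log_formula (θ : Fin 3 → ℝ) (h0 : 0 < enorm3 θ) (hπ : enorm3 θ < Real.pi) :
    hat θ = (enorm3 θ / (2 * Real.sin (enorm3 θ))) •
      (NormedSpace.exp (hat θ) - (NormedSpace.exp (hat θ))ᵀ) := by
  have hsin : Real.sin (enorm3 θ) ≠ 0 := (Real.sin_pos_of_pos_of_lt_pi h0 hπ).ne'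
  have hodd : exp (hat θ) - exp (-hat θ) = (2 * Real.sin (enorm3 θ) / enorm3 θ) • hat θ :=
    exp_sub_exp_neg_of_pow_three_eq_neg_sq_smul h0.ne' (hat_pow_three θ)
  rw [← exp_transpose, hat_transpose, hodd, smul_smul, div_mul_div_comm, mul_comm,
    div_self (by positivity), one_smul]
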